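/- arXiv:1504.02870 — 2 statements merged into one kernel-verified Lean document; each statement's English description precedes it below -/
import Mathlib

section
/- (Theorem 1, bounds form) Under the setup of the incremental learning ball containment, for any η ∈ ℝ^d, ηᵀβ*_new lies in the interval [ηᵀm − ‖η‖ r, ηᵀm + ‖η‖ r], where m = ((n_old+n_new)/(2 n_new)) β*_old − (λ⁻¹ (n_A+n_R)/(2 n_new)) Δs and r = (1/2) ‖ ((n_A−n_R)/n_new) β*_old + λ⁻¹ ((n_A+n_R)/n_new) Δs ‖. -/
/-!
Write `F_new = L_new + (λ/2)‖·‖²` for the new regularised risk. Convexity of the losses makes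
`∇F_new` `λ`-strongly monotone, and `∇F_new β*_new = 0`, so
`λ ‖β*_old - β*_new‖² ≤ ⟪∇F_new β*_old, β*_old - β*_new⟫`. This inequality says precisely that
`β*_new` lies in the closed ball with centre `β*_old - ∇F_new β*_old / (2λ)` and radius
`‖∇F_new β*_old‖ / (2λ)`. The optimality condition `∑_{D_old} ∇ℓ_i β*_old = -n_old λ β*_old`
expresses `∇F_new β*_old` through `β*_old` and `Δs`, which turns centre and radius into `m`
and `r`; Cauchy–Schwarz then bounds `⟪η, β*_new⟫`.
-/

open InnerProductSpace Set

theorem convexOn_sum {𝕜 E β ι : Type*} [Semiring 𝕜] [PartialOrder 𝕜] [AddCommMonoid E]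
    [AddCommMonoid β] [PartialOrder β] [IsOrderedAddMonoid β] [SMul 𝕜 E] [Module 𝕜 β]
    {s : Set E} {t : Finset ι} {f : ι → E → β} (hs : Convex 𝕜 s)
    (h : ∀ i ∈ t, ConvexOn 𝕜 s (f i)) : ConvexOn 𝕜 s fun x => ∑ i ∈ t, f i x := by
  classical
  induction t using Finset.induction_on with
  | empty => simpa using convexOn_const 0 hs
  | insert i t hi ih =>
    simp_rw [Finset.sum_insert hi]
    exact (h i (Finset.mem_insert_self i t)).add
      (ih fun j hj => h j (Finset.mem_insert_of_mem hj))

theorem Finset.sum_sdiff_union {ι M : Type*} [AddCommGroup M] [DecidableEq ι]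
    {s t u : Finset ι} (ht : t ⊆ s) (hu : Disjoint u (s \ t)) (f : ι → M) :
    ∑ i ∈ s \ t ∪ u, f i = ∑ i ∈ s, f i - ∑ i ∈ t, f i + ∑ i ∈ u, f i := by
  rw [Finset.sum_union hu.symm, Finset.sum_sdiff_eq_sub ht]

theorem ConvexOn.add_le_of_hasFDerivAt {F : Type*} [NormedAddCommGroup F] [NormedSpace ℝ F]
    {s : Set F} {f : F → ℝ} {f' : StrongDual ℝ F} {x y : F}
    (hf : ConvexOn ℝ s f) (hx : x ∈ s) (hy : y ∈ s) (hf' : HasFDerivAt f f' x) :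
    f x + f' (y - x) ≤ f y := by
  let L : ℝ →ᵃ[ℝ] F := AffineMap.lineMap x y
  have hline : HasDerivAt (f ∘ L) (f' (y - x)) 0 :=
    hf'.comp_hasDerivAt_of_eq 0 AffineMap.hasDerivAt_lineMap (by simp [L])
  have hslope := (hf.comp_affineMap L).le_slope_of_hasDerivAt
    (by simpa [L]) (by simpa [L]) zero_lt_one hline
  simp only [slope_def_field, Function.comp_apply, L, AffineMap.lineMap_apply_zero,
    AffineMap.lineMap_apply_one, sub_zero, div_one] at hslope
  linarith

section InnerProductSpace

variable {E : Type*} [NormedAddCommGroup E] [InnerProductSpace ℝ E]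

theorem norm_sub_le_norm_iff_sq_le_two_inner {u v : E} :
    ‖u - v‖ ≤ ‖u‖ ↔ ‖v‖ ^ 2 ≤ 2 * ⟪u, v⟫_ℝ := by
  rw [← sq_le_sq₀ (norm_nonneg _) (norm_nonneg _), norm_sub_sq_real]
  constructor <;> intro h <;> linarith

theorem inner_mem_Icc_of_mem_closedBall {c y : E} {r : ℝ} (hy : y ∈ Metric.closedBall c r)
    (η : E) : ⟪η, y⟫_ℝ ∈ Icc (⟪η, c⟫_ℝ - ‖η‖ * r) (⟪η, c⟫_ℝ + ‖η‖ * r) := by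
  have h : |⟪η, y - c⟫_ℝ| ≤ ‖η‖ * r := (abs_real_inner_le_norm η _).trans
    (mul_le_mul_of_nonneg_left (mem_closedBall_iff_norm.mp hy) (norm_nonneg η))
  rw [inner_sub_right, abs_sub_le_iff] at h
  constructor <;> linarith [h.1, h.2]

end InnerProductSpace

section Gradient

variable {E : Type*} [NormedAddCommGroup E] [InnerProductSpace ℝ E] [CompleteSpace E]
  {s : Set E} {f g : E → ℝ} {f' g' x y β : E} {lam : ℝ}

theorem HasGradientAt.add (hf : HasGradientAt f f' x) (hg : HasGradientAt g g' x) :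
    HasGradientAt (fun y => f y + g y) (f' + g') x := by
  rw [hasGradientAt_iff_hasFDerivAt, map_add]
  exact hf.hasFDerivAt.add hg.hasFDerivAt

theorem HasGradientAt.const_mul (hf : HasGradientAt f f' x) (c : ℝ) :
    HasGradientAt (fun y => c * f y) (c • f') x := by
  rw [hasGradientAt_iff_hasFDerivAt, map_smulₛₗ]
  exact hf.hasFDerivAt.const_mul c

theorem HasGradientAt.sum {ι : Type*} {t : Finset ι} {f : ι → E → ℝ} {f' : ι → E}
    (h : ∀ i ∈ t, HasGradientAt (f i) (f' i) x) :
    HasGradientAt (fun y => ∑ i ∈ t, f i y) (∑ i ∈ t, f' i) x := by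
  rw [hasGradientAt_iff_hasFDerivAt, map_sum]
  exact HasFDerivAt.fun_sum fun i hi => (h i hi).hasFDerivAt

theorem hasGradientAt_norm_sq (x : E) : HasGradientAt (fun y => ‖y‖ ^ 2) ((2 : ℝ) • x) x := by
  rw [hasGradientAt_iff_hasFDerivAt]
  refine (hasStrictFDerivAt_norm_sq x).hasFDerivAt.congr_fderiv ?_
  ext v
  simp

theorem IsLocalMin.hasGradientAt_eq_zero (hmin : IsLocalMin f x) (hf : HasGradientAt f f' x) :
    f' = 0 :=
  (toDual ℝ E).map_eq_zero_iff.mp (hmin.hasFDerivAt_eq_zero hf.hasFDerivAt)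

theorem ConvexOn.add_inner_le_of_hasGradientAt (hf : ConvexOn ℝ s f) (hx : x ∈ s) (hy : y ∈ s)
    (hf' : HasGradientAt f f' x) : f x + ⟪f', y - x⟫_ℝ ≤ f y :=
  hf.add_le_of_hasFDerivAt hx hy hf'.hasFDerivAt

theorem ConvexOn.inner_sub_nonneg_of_hasGradientAt (hf : ConvexOn ℝ s f) (hx : x ∈ s)
    (hy : y ∈ s) (hfx : HasGradientAt f f' x) (hfy : HasGradientAt f g' y) :
    0 ≤ ⟪f' - g', x - y⟫_ℝ := by
  have hxy := hf.add_inner_le_of_hasGradientAt hx hy hfx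
  have hyx := hf.add_inner_le_of_hasGradientAt hy hx hfy
  rw [← neg_sub x y, inner_neg_right] at hxy
  rw [inner_sub_left]
  linarith

theorem IsMinOn.eq_neg_smul_of_hasGradientAt
    (hβ : IsMinOn (fun y => f y + lam / 2 * ‖y‖ ^ 2) univ β) (hf : HasGradientAt f g' β) :
    g' = -lam • β := by
  have h := (hβ.isLocalMin Filter.univ_mem).hasGradientAt_eq_zero
    (hf.add ((hasGradientAt_norm_sq β).const_mul (lam / 2)))
  rw [smul_smul, div_mul_cancel₀ _ two_ne_zero] at h
  rw [neg_smul]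
  exact eq_neg_of_add_eq_zero_left h

theorem IsMinOn.mem_closedBall_of_convexOn (hf : ConvexOn ℝ univ f) (hlam : 0 < lam)
    (hβ : IsMinOn (fun y => f y + lam / 2 * ‖y‖ ^ 2) univ β)
    (hfx : HasGradientAt f f' x) (hfβ : HasGradientAt f g' β) :
    β ∈ Metric.closedBall (x - (2 * lam)⁻¹ • (f' + lam • x)) ‖(2 * lam)⁻¹ • (f' + lam • x)‖ := by
  set u := (2 * lam)⁻¹ • (f' + lam • x)
  have hmono := hf.inner_sub_nonneg_of_hasGradientAt (mem_univ x) (mem_univ β) hfx hfβ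
  have hsplit : f' + lam • x = (f' - g') + lam • (x - β) := by
    rw [hβ.eq_neg_smul_of_hasGradientAt hfβ]; module
  have hsq : ‖x - β‖ ^ 2 ≤ 2 * ⟪u, x - β⟫_ℝ := by
    rw [real_inner_smul_left, hsplit, inner_add_left, real_inner_smul_left,
      real_inner_self_eq_norm_sq]
    calc ‖x - β‖ ^ 2 ≤ lam⁻¹ * ⟪f' - g', x - β⟫_ℝ + ‖x - β‖ ^ 2 :=
          le_add_of_nonneg_left (mul_nonneg (inv_nonneg.mpr hlam.le) hmono)
      _ = _ := by field_simp
  rw [Metric.mem_closedBall, dist_eq_norm, show β - (x - u) = u - (x - β) by abel]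
  exact norm_sub_le_norm_iff_sq_le_two_inner.mpr hsq

end Gradient

section EmpiricalRisk

variable {ι E : Type*} [NormedAddCommGroup E] [InnerProductSpace ℝ E]
  (ℓ : ι → E → ℝ) (D : Finset ι)

noncomputable def empiricalRisk (β : E) : ℝ := (1 / (D.card : ℝ)) * (∑ i ∈ D, ℓ i β)

noncomputable def ridgeRisk (lam : ℝ) (β : E) : ℝ := empiricalRisk ℓ D β + lam / 2 * ‖β‖ ^ 2

variable {ℓ D}

theorem convexOn_empiricalRisk (hconv : ∀ i ∈ D, ConvexOn ℝ univ (ℓ i)) :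
    ConvexOn ℝ univ (empiricalRisk ℓ D) :=
  (convexOn_sum convex_univ hconv).smul (c := 1 / (D.card : ℝ)) (by positivity)

variable [CompleteSpace E] {β : E}

theorem hasGradientAt_empiricalRisk (hdiff : ∀ i ∈ D, DifferentiableAt ℝ (ℓ i) β) :
    HasGradientAt (empiricalRisk ℓ D) ((1 / (D.card : ℝ)) • ∑ i ∈ D, gradient (ℓ i) β) β :=
  (HasGradientAt.sum fun i hi => (hdiff i hi).hasGradientAt).const_mul _

theorem IsMinOn.sum_gradient_eq_neg_smul {lam : ℝ} (hβ : IsMinOn (ridgeRisk ℓ D lam) univ β)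
    (hdiff : ∀ i ∈ D, DifferentiableAt ℝ (ℓ i) β) (hD : (D.card : ℝ) ≠ 0) :
    ∑ i ∈ D, gradient (ℓ i) β = -(D.card * lam) • β := by
  have h := hβ.eq_neg_smul_of_hasGradientAt (hasGradientAt_empiricalRisk hdiff)
  calc ∑ i ∈ D, gradient (ℓ i) β
      = (D.card : ℝ) • ((1 / (D.card : ℝ)) • ∑ i ∈ D, gradient (ℓ i) β) := by
        rw [smul_smul, mul_one_div_cancel hD, one_smul]
    _ = -(D.card * lam) • β := by rw [h, smul_smul, mul_neg]

end EmpiricalRisk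

section IncrementalBall

variable {V : Type*} [AddCommGroup V] [Module ℝ V] (β s : V) {lam nold nnew nA nR : ℝ}

theorem incremental_ball_center (hlam : lam ≠ 0) (hnew : nnew ≠ 0) :
    β - (2 * lam)⁻¹ • ((1 / nnew) • (-(nold * lam) • β + (nA + nR) • s) + lam • β)
      = ((nold + nnew) / (2 * nnew)) • β - (lam⁻¹ * (nA + nR) / (2 * nnew)) • s := by
  match_scalars
  · field_simp
    ring
  · field_simp

theorem incremental_ball_radius (hlam : lam ≠ 0) (hnew : nnew ≠ 0)
    (hcard : nnew = nold - nR + nA) :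
    (2 * lam)⁻¹ • ((1 / nnew) • (-(nold * lam) • β + (nA + nR) • s) + lam • β)
      = (1 / 2 : ℝ) • (((nA - nR) / nnew) • β + (lam⁻¹ * (nA + nR) / nnew) • s) := by
  match_scalars
  · field_simp
    linarith
  · field_simp

end IncrementalBall

theorem theorem1_linear_score_bounds_general
    {d : ℕ} {ι : Type*} [DecidableEq ι]
    (Dold Dnew A R : Finset ι)
    (ℓ : ι → EuclideanSpace ℝ (Fin d) → ℝ)
    (hdiff : ∀ i, Differentiable ℝ (ℓ i))
    (hconv : ∀ i, ConvexOn ℝ Set.univ (ℓ i))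
    (lam : ℝ) (hlam : 0 < lam)
    (hR : R ⊆ Dold)
    (hDnew : Dnew = (Dold \ R) ∪ A)
    (hAdisj : Disjoint A (Dold \ R))
    (hnold : 0 < Dold.card) (hnnew : 0 < Dnew.card) (hAR : 0 < A.card + R.card)
    (βold βnew : EuclideanSpace ℝ (Fin d))
    (hminold : ∀ β,
      (1 / (Dold.card : ℝ)) * (∑ i ∈ Dold, ℓ i βold) + (lam / 2) * ‖βold‖ ^ 2 ≤
      (1 / (Dold.card : ℝ)) * (∑ i ∈ Dold, ℓ i β) + (lam / 2) * ‖β‖ ^ 2)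
    (hminnew : ∀ β,
      (1 / (Dnew.card : ℝ)) * (∑ i ∈ Dnew, ℓ i βnew) + (lam / 2) * ‖βnew‖ ^ 2 ≤
      (1 / (Dnew.card : ℝ)) * (∑ i ∈ Dnew, ℓ i β) + (lam / 2) * ‖β‖ ^ 2)
    (Δs m : EuclideanSpace ℝ (Fin d)) (r : ℝ)
    (hΔs : Δs = (1 / ((A.card : ℝ) + (R.card : ℝ))) •
        (∑ i ∈ A, gradient (ℓ i) βold - ∑ i ∈ R, gradient (ℓ i) βold))
    (hm : m = (((Dold.card : ℝ) + (Dnew.card : ℝ)) / (2 * (Dnew.card : ℝ))) • βold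
        - (lam⁻¹ * ((A.card : ℝ) + (R.card : ℝ)) / (2 * (Dnew.card : ℝ))) • Δs)
    (hr : r = (1 / 2) * ‖(((A.card : ℝ) - (R.card : ℝ)) / (Dnew.card : ℝ)) • βold
        + (lam⁻¹ * ((A.card : ℝ) + (R.card : ℝ)) / (Dnew.card : ℝ)) • Δs‖) :
    ∀ η : EuclideanSpace ℝ (Fin d),
      ⟪η, m⟫_ℝ - ‖η‖ * r ≤ ⟪η, βnew⟫_ℝ ∧ ⟪η, βnew⟫_ℝ ≤ ⟪η, m⟫_ℝ + ‖η‖ * r := by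
  intro η
  have hdiffAt (D : Finset ι) (β) : ∀ i ∈ D, DifferentiableAt ℝ (ℓ i) β :=
    fun i _ => (hdiff i).differentiableAt
  have hold : IsMinOn (ridgeRisk ℓ Dold lam) univ βold := isMinOn_univ_iff.mpr hminold
  have hnew : IsMinOn (ridgeRisk ℓ Dnew lam) univ βnew := isMinOn_univ_iff.mpr hminnew
  have hball := hnew.mem_closedBall_of_convexOn (convexOn_empiricalRisk fun i _ => hconv i) hlam
    (hasGradientAt_empiricalRisk (hdiffAt Dnew βold))
    (hasGradientAt_empiricalRisk (hdiffAt Dnew βnew))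
  have hcard : (Dnew.card : ℝ) = Dold.card - R.card + A.card := by
    simpa only [hDnew, ← Finset.cast_card] using Finset.sum_sdiff_union hR hAdisj fun _ => (1 : ℝ)
  have hsum_AR : ∑ i ∈ A, gradient (ℓ i) βold - ∑ i ∈ R, gradient (ℓ i) βold
      = ((A.card : ℝ) + R.card) • Δs := by
    have hAR' : (A.card : ℝ) + R.card ≠ 0 := by exact_mod_cast hAR.ne'
    rw [hΔs, smul_smul, mul_one_div_cancel hAR', one_smul]
  have hsum_new : ∑ i ∈ Dnew, gradient (ℓ i) βold
      = -(Dold.card * lam) • βold + ((A.card : ℝ) + R.card) • Δs := by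
    rw [hDnew, Finset.sum_sdiff_union hR hAdisj,
      hold.sum_gradient_eq_neg_smul (hdiffAt Dold βold) (by exact_mod_cast hnold.ne'), ← hsum_AR]
    abel
  have hnnew' : (Dnew.card : ℝ) ≠ 0 := by exact_mod_cast hnnew.ne'
  rw [hsum_new, incremental_ball_center _ _ hlam.ne' hnnew', ← hm,
    incremental_ball_radius _ _ hlam.ne' hnnew' hcard, norm_smul,
    Real.norm_of_nonneg one_half_pos.le, ← hr] at hball
  exact inner_mem_Icc_of_mem_closedBall hball η

theorem theorem1_linear_score_bounds
    {d : ℕ} {ι : Type*} [DecidableEq ι]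
    (Dold Dnew A R : Finset ι)
    (ℓ : ι → EuclideanSpace ℝ (Fin d) → ℝ)
    (hdiff : ∀ i, Differentiable ℝ (ℓ i))
    (hconv : ∀ i, ConvexOn ℝ Set.univ (ℓ i))
    (lam : ℝ) (hlam : 0 < lam)
    (hA : A ⊆ Dnew) (hR : R ⊆ Dold)
    (hDnew : Dnew = (Dold \ R) ∪ A)
    (hAdisj : Disjoint A (Dold \ R))
    (hnold : 0 < Dold.card) (hnnew : 0 < Dnew.card) (hAR : 0 < A.card + R.card)
    (βold βnew : EuclideanSpace ℝ (Fin d))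
    (hminold : ∀ β,
      (1 / (Dold.card : ℝ)) * (∑ i ∈ Dold, ℓ i βold) + (lam / 2) * ‖βold‖ ^ 2 ≤
      (1 / (Dold.card : ℝ)) * (∑ i ∈ Dold, ℓ i β) + (lam / 2) * ‖β‖ ^ 2)
    (hminnew : ∀ β,
      (1 / (Dnew.card : ℝ)) * (∑ i ∈ Dnew, ℓ i βnew) + (lam / 2) * ‖βnew‖ ^ 2 ≤
      (1 / (Dnew.card : ℝ)) * (∑ i ∈ Dnew, ℓ i β) + (lam / 2) * ‖β‖ ^ 2)
    (Δs m : EuclideanSpace ℝ (Fin d)) (r : ℝ)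
    (hΔs : Δs = (1 / ((A.card : ℝ) + (R.card : ℝ))) •
        (∑ i ∈ A, gradient (ℓ i) βold - ∑ i ∈ R, gradient (ℓ i) βold))
    (hm : m = (((Dold.card : ℝ) + (Dnew.card : ℝ)) / (2 * (Dnew.card : ℝ))) • βold
        - (lam⁻¹ * ((A.card : ℝ) + (R.card : ℝ)) / (2 * (Dnew.card : ℝ))) • Δs)
    (hr : r = (1 / 2) * ‖(((A.card : ℝ) - (R.card : ℝ)) / (Dnew.card : ℝ)) • βold
        + (lam⁻¹ * ((A.card : ℝ) + (R.card : ℝ)) / (Dnew.card : ℝ)) • Δs‖) :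
    ∀ η : EuclideanSpace ℝ (Fin d),
      ⟪η, m⟫_ℝ - ‖η‖ * r ≤ ⟪η, βnew⟫_ℝ ∧ ⟪η, βnew⟫_ℝ ≤ ⟪η, m⟫_ℝ + ‖η‖ * r :=
  theorem1_linear_score_bounds_general Dold Dnew A R ℓ hdiff hconv lam hlam hR hDnew hAdisj hnold
    hnnew hAR βold βnew hminold hminnew Δs m r hΔs hm hr
end

section
/- (Ball containment via suboptimal gradient) With β*_new the minimizer of F(β) = (1/n_new) Σ_{i∈D_new} ℓ_i(β) + (λ/2)‖β‖² and β̂ ∈ ℝ^d arbitrary with full objective gradient g(β̂), we have ‖β*_new − (β̂ − (λ⁻¹/2) g(β̂))‖ ≤ (λ⁻¹/2) ‖g(β̂)‖. -/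
/-! Since `βnew` minimizes `L + (λ/2)‖·‖²` with `L` convex and differentiable, the gradient
`∇L + λ·id` vanishes at `βnew`. Monotonicity of `∇L` makes `∇L + λ·id` `λ`-strongly monotone,
so `λ‖β̂ - βnew‖² ≤ ⟪g, β̂ - βnew⟫`; completing the square, this says exactly that `βnew` lies in
the closed ball of radius `‖g‖/(2λ)` around `β̂ - g/(2λ)`. -/

open Set Finset InnerProductSpace RealInnerProductSpace
open scoped Gradient

section ConvexSum

variable {E ι : Type*} [AddCommGroup E] [Module ℝ E] {s : Set E}

theorem ConvexOn.fun_sum {D : Finset ι} {f : ι → E → ℝ} (hs : Convex ℝ s)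
    (hf : ∀ i ∈ D, ConvexOn ℝ s (f i)) : ConvexOn ℝ s fun x => ∑ i ∈ D, f i x := by
  classical
  induction D using Finset.induction_on with
  | empty => simpa using convexOn_const (0 : ℝ) hs
  | insert j D hj ih =>
    simp only [Finset.sum_insert hj]
    exact (hf j (mem_insert_self j D)).add (ih fun i hi => hf i (mem_insert_of_mem hi))

end ConvexSum

section InnerProduct

variable {E : Type*} [NormedAddCommGroup E] [InnerProductSpace ℝ E]

theorem norm_sub_sub_smul_le_of_mul_norm_sq_le_inner {lam : ℝ} (hlam : 0 < lam) {x y g : E}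
    (h : lam * ‖x - y‖ ^ 2 ≤ ⟪g, x - y⟫) :
    ‖y - (x - (lam⁻¹ / 2) • g)‖ ≤ (lam⁻¹ / 2) * ‖g‖ := by
  set k := lam⁻¹ / 2
  have hk : 0 ≤ k := by positivity
  have hkl : 2 * k * lam = 1 := by simp only [k]; field_simp
  have hexpand : ‖y - (x - k • g)‖ ^ 2 = ‖x - y‖ ^ 2 - 2 * k * ⟪g, x - y⟫ + (k * ‖g‖) ^ 2 := by
    rw [show y - (x - k • g) = -(x - y) + k • g by abel, norm_add_sq_real, norm_neg,
      inner_neg_left, real_inner_smul_right, real_inner_comm, norm_smul, Real.norm_of_nonneg hk]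
    ring
  have hsq : ‖y - (x - k • g)‖ ^ 2 ≤ (k * ‖g‖) ^ 2 := by
    rw [hexpand]
    nlinarith
  exact le_of_pow_le_pow_left₀ two_ne_zero (by positivity) hsq

end InnerProduct

section Gradient

variable {E : Type*} [NormedAddCommGroup E] [InnerProductSpace ℝ E] [CompleteSpace E]
  {f : E → ℝ} {x y : E}

theorem ConvexOn.inner_gradient_le_sub (hf : ConvexOn ℝ univ f) (hx : DifferentiableAt ℝ f x)
    (y : E) : ⟪∇ f x, y - x⟫ ≤ f y - f x := by
  have hline : ConvexOn ℝ univ (f ∘ AffineMap.lineMap (k := ℝ) x y) := by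
    simpa using hf.comp_affineMap (AffineMap.lineMap x y)
  have hderiv : HasDerivAt (f ∘ AffineMap.lineMap (k := ℝ) x y) ⟪∇ f x, y - x⟫ 0 := by
    have hx' : HasGradientAt f (∇ f x) (AffineMap.lineMap x y (0 : ℝ)) := by
      simpa using hx.hasGradientAt
    simpa using (hasGradientAt_iff_hasFDerivAt.mp hx').comp_hasDerivAt (0 : ℝ)
      (AffineMap.hasDerivAt_lineMap (a := x) (b := y) (x := (0 : ℝ)))
  simpa [slope_def_field] using
    hline.le_slope_of_hasDerivAt (mem_univ 0) (mem_univ 1) zero_lt_one hderiv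

theorem ConvexOn.inner_gradient_sub_gradient_nonneg (hf : ConvexOn ℝ univ f)
    (hx : DifferentiableAt ℝ f x) (hy : DifferentiableAt ℝ f y) :
    0 ≤ ⟪∇ f x - ∇ f y, x - y⟫ := by
  have hxy := hf.inner_gradient_le_sub hx y
  have hyx := hf.inner_gradient_le_sub hy x
  rw [← neg_sub x y, inner_neg_right] at hxy
  rw [inner_sub_left]
  linarith

theorem IsLocalMin.gradient_add_smul_eq_zero {lam : ℝ} (hx : DifferentiableAt ℝ f x)
    (hmin : IsLocalMin (fun z => f z + (lam / 2) * ‖z‖ ^ 2) x) :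
    ∇ f x + lam • x = 0 := by
  have hderiv : HasGradientAt (fun z => f z + (lam / 2) * ‖z‖ ^ 2) (∇ f x + lam • x) x := by
    rw [hasGradientAt_iff_hasFDerivAt]
    refine (hx.hasFDerivAt.fun_add
      ((hasStrictFDerivAt_norm_sq x).hasFDerivAt.const_mul (lam / 2))).congr_fderiv ?_
    ext v
    simp only [add_apply, smul_apply, coe_innerSL_apply, nsmul_eq_mul, Nat.cast_ofNat,
      smul_eq_mul, map_add, toDual_gradient, map_smul, toDual_apply_apply, add_right_inj]
    ring
  exact (toDual ℝ E).map_eq_zero_iff.mp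
    (hmin.hasFDerivAt_eq_zero (hasGradientAt_iff_hasFDerivAt.mp hderiv))

theorem ConvexOn.mul_norm_sub_sq_le_inner_of_isLocalMin {lam : ℝ} {x₀ : E}
    (hf : ConvexOn ℝ univ f) (hd : Differentiable ℝ f)
    (hmin : IsLocalMin (fun z => f z + (lam / 2) * ‖z‖ ^ 2) x₀) (x : E) :
    lam * ‖x - x₀‖ ^ 2 ≤ ⟪∇ f x + lam • x, x - x₀⟫ := by
  have hstat := hmin.gradient_add_smul_eq_zero (hd x₀)
  have hmono := hf.inner_gradient_sub_gradient_nonneg (hd x) (hd x₀)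
  calc lam * ‖x - x₀‖ ^ 2 ≤ ⟪∇ f x - ∇ f x₀, x - x₀⟫ + lam * ‖x - x₀‖ ^ 2 := by linarith
    _ = ⟪(∇ f x + lam • x) - (∇ f x₀ + lam • x₀), x - x₀⟫ := by
      rw [add_sub_add_comm, ← smul_sub, inner_add_left, real_inner_smul_left,
        real_inner_self_eq_norm_sq]
    _ = ⟪∇ f x + lam • x, x - x₀⟫ := by rw [hstat, sub_zero]

theorem gradient_const_mul_sum {ι : Type*} {D : Finset ι} {ℓ : ι → E → ℝ} (c : ℝ)
    (hd : ∀ i ∈ D, DifferentiableAt ℝ (ℓ i) x) :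
    ∇ (fun y => c * ∑ i ∈ D, ℓ i y) x = c • ∑ i ∈ D, ∇ (ℓ i) x := by
  refine HasGradientAt.gradient ?_
  rw [hasGradientAt_iff_hasFDerivAt, map_smul, map_sum]
  simp only [toDual_gradient]
  exact (HasFDerivAt.fun_sum fun i hi => (hd i hi).hasFDerivAt).const_mul c

end Gradient

theorem ball_containment_via_suboptimal_gradient_general
    {d : ℕ} {ι : Type*} (D : Finset ι)
    (ℓ : ι → EuclideanSpace ℝ (Fin d) → ℝ)
    (hdiff : ∀ i ∈ D, Differentiable ℝ (ℓ i))
    (hconv : ∀ i ∈ D, ConvexOn ℝ Set.univ (ℓ i))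
    (lam : ℝ) (hlam : 0 < lam)
    (βnew βhat : EuclideanSpace ℝ (Fin d))
    (hmin : ∀ β, (1 / (D.card : ℝ)) * (∑ i ∈ D, ℓ i βnew) + (lam / 2) * ‖βnew‖ ^ 2 ≤
                 (1 / (D.card : ℝ)) * (∑ i ∈ D, ℓ i β) + (lam / 2) * ‖β‖ ^ 2)
    (g : EuclideanSpace ℝ (Fin d))
    (hg : g = (1 / (D.card : ℝ)) • (∑ i ∈ D, gradient (ℓ i) βhat) + lam • βhat) :
    ‖βnew - (βhat - (lam⁻¹ / 2) • g)‖ ≤ (lam⁻¹ / 2) * ‖g‖ := by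
  set f := fun β => (1 / (D.card : ℝ)) * ∑ i ∈ D, ℓ i β
  have hf : ConvexOn ℝ univ f := (ConvexOn.fun_sum convex_univ hconv).smul (by positivity)
  have hd : Differentiable ℝ f := (Differentiable.fun_sum hdiff).const_mul _
  have hgrad : ∇ f βhat = (1 / (D.card : ℝ)) • ∑ i ∈ D, ∇ (ℓ i) βhat :=
    gradient_const_mul_sum _ fun i hi => hdiff i hi βhat
  rw [hg, ← hgrad]
  exact norm_sub_sub_smul_le_of_mul_norm_sq_le_inner hlam
    (hf.mul_norm_sub_sq_le_inner_of_isLocalMin hd (Filter.Eventually.of_forall hmin) βhat)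

theorem ball_containment_via_suboptimal_gradient
    {d : ℕ} {ι : Type*} (D : Finset ι)
    (ℓ : ι → EuclideanSpace ℝ (Fin d) → ℝ)
    (hdiff : ∀ i ∈ D, Differentiable ℝ (ℓ i))
    (hconv : ∀ i ∈ D, ConvexOn ℝ Set.univ (ℓ i))
    (lam : ℝ) (hlam : 0 < lam)
    (hD : 0 < D.card)
    (βnew βhat : EuclideanSpace ℝ (Fin d))
    (hmin : ∀ β, (1 / (D.card : ℝ)) * (∑ i ∈ D, ℓ i βnew) + (lam / 2) * ‖βnew‖ ^ 2 ≤
                 (1 / (D.card : ℝ)) * (∑ i ∈ D, ℓ i β) + (lam / 2) * ‖β‖ ^ 2)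
    (g : EuclideanSpace ℝ (Fin d))
    (hg : g = (1 / (D.card : ℝ)) • (∑ i ∈ D, gradient (ℓ i) βhat) + lam • βhat) :
    ‖βnew - (βhat - (lam⁻¹ / 2) • g)‖ ≤ (lam⁻¹ / 2) * ‖g‖ :=
  ball_containment_via_suboptimal_gradient_general D ℓ hdiff hconv lam hlam βnew βhat hmin g hg
end
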